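/- arXiv:1601.03411 — 4 statements merged into one kernel-verified Lean document; each statement's English description precedes it below -/
import Mathlib

section
/- Let 0 < λ ≤ log 2 and define q_0 = 1 and q_n = (e^{−λ(n+1)}/n) Σ_{k=1}^n q_{k−1} q_{n−k} for n ≥ 1. Then for all n ≥ 0, q_n ≤ e^{−2λn} / (n!)^{λ/log 2}. -/
/-!
Write `α = λ / log 2`, so that `2 ^ α = e ^ λ` and `0 < α ≤ 1`. The bound `B n = e^{-2λn} / (n!)^α`
is a supersolution of the recurrence, so strong induction gives `q n ≤ B n`. On the antidiagonal
`i + j = m` one has `B i * B j = e^{-2λm} ((i! j!)⁻¹)^α`, and by concavity of `x ↦ x ^ α` (Jensen)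
`∑ ((i! j!)⁻¹)^α ≤ (m + 1) (∑ (i! j!)⁻¹ / (m + 1))^α = (m + 1) (2^m / (m + 1)!)^α
= (m + 1) e^{λm} / ((m + 1)!)^α`; the exponentials then combine to exactly `B (m + 1)`.
-/

open Real Finset
open scoped Nat

theorem Real.sum_rpow_le_card_mul_rpow_div_card {ι : Type*} (s : Finset ι) {c : ι → ℝ}
    (hc : ∀ i ∈ s, 0 ≤ c i) {p : ℝ} (hp₀ : 0 ≤ p) (hp₁ : p ≤ 1) :
    ∑ i ∈ s, c i ^ p ≤ #s * ((∑ i ∈ s, c i) / #s) ^ p := by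
  rcases s.eq_empty_or_nonempty with rfl | hs
  · simp
  have hcard : (0 : ℝ) < #s := by exact_mod_cast hs.card_pos
  have jensen := (concaveOn_rpow hp₀ hp₁).le_map_sum (t := s) (w := fun _ ↦ (#s : ℝ)⁻¹) (p := c)
    (fun _ _ ↦ by positivity) (by simp [hcard.ne']) hc
  simp only [smul_eq_mul, inv_mul_eq_div, ← sum_div] at jensen
  rwa [div_le_iff₀ hcard, mul_comm] at jensen

theorem sum_antidiagonal_inv_factorial_mul_factorial (m : ℕ) :
    ∑ p ∈ antidiagonal m, ((p.1 ! * p.2 ! : ℝ))⁻¹ = 2 ^ m / m ! := by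
  have binomial : ∑ k ∈ range (m + 1), (m.choose k : ℝ) = 2 ^ m := by
    exact_mod_cast Nat.sum_range_choose m
  rw [eq_div_iff (by positivity), sum_mul, ← binomial,
    Finset.Nat.sum_antidiagonal_eq_sum_range_succ_mk]
  refine sum_congr rfl fun k hk ↦ ?_
  have hkm : k ≤ m := Nat.lt_succ_iff.mp (mem_range.mp hk)
  rw [inv_mul_eq_div, div_eq_iff (by positivity), ← Nat.choose_mul_factorial_mul_factorial hkm]
  push_cast
  ring

theorem sum_antidiagonal_rpow_inv_factorial_mul_factorial_le {p : ℝ} (hp₀ : 0 ≤ p) (hp₁ : p ≤ 1)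
    (m : ℕ) :
    ∑ ij ∈ antidiagonal m, ((ij.1 ! * ij.2 ! : ℝ))⁻¹ ^ p ≤ (m + 1) * (2 ^ m / (m + 1)!) ^ p := by
  have := Real.sum_rpow_le_card_mul_rpow_div_card (antidiagonal m)
    (c := fun ij ↦ ((ij.1 ! * ij.2 ! : ℝ))⁻¹) (fun _ _ ↦ by positivity) hp₀ hp₁
  rw [sum_antidiagonal_inv_factorial_mul_factorial, Finset.Nat.card_antidiagonal, div_div] at this
  convert this using 4 <;> push_cast [Nat.factorial_succ] <;> ring

theorem sum_Icc_one_eq_sum_antidiagonal {M : Type*} [AddCommMonoid M] (f : ℕ → ℕ → M) (m : ℕ) :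
    ∑ k ∈ Icc 1 (m + 1), f (k - 1) (m + 1 - k) = ∑ ij ∈ antidiagonal m, f ij.1 ij.2 := by
  rw [Finset.Nat.sum_antidiagonal_eq_sum_range_succ, ← Finset.Ico_add_one_right_eq_Icc,
    sum_Ico_eq_sum_range]
  refine sum_congr rfl fun k _ ↦ ?_
  congr 1 <;> omega

theorem le_of_antidiagonal_recurrence {q B c : ℕ → ℝ} (hq₀ : 0 ≤ q 0) (hB₀ : q 0 ≤ B 0)
    (hc : ∀ m, 0 ≤ c m) (hq : ∀ m, q (m + 1) = c m * ∑ ij ∈ antidiagonal m, q ij.1 * q ij.2)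
    (hB : ∀ m, c m * ∑ ij ∈ antidiagonal m, B ij.1 * B ij.2 ≤ B (m + 1)) (n : ℕ) :
    q n ≤ B n := by
  suffices h : 0 ≤ q n ∧ q n ≤ B n from h.2
  induction n using Nat.strong_induction_on with
  | _ n ih =>
    rcases n with _ | m
    · exact ⟨hq₀, hB₀⟩
    have bounds : ∀ ij ∈ antidiagonal m,
        (0 ≤ q ij.1 ∧ q ij.1 ≤ B ij.1) ∧ (0 ≤ q ij.2 ∧ q ij.2 ≤ B ij.2) :=
      fun ij hij ↦ have := mem_antidiagonal.mp hij; ⟨ih _ (by omega), ih _ (by omega)⟩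
    rw [hq m]
    refine ⟨mul_nonneg (hc m) (sum_nonneg fun ij hij ↦ ?_), le_trans ?_ (hB m)⟩
    · exact mul_nonneg (bounds ij hij).1.1 (bounds ij hij).2.1
    refine mul_le_mul_of_nonneg_left (sum_le_sum fun ij hij ↦ ?_) (hc m)
    obtain ⟨⟨h₁, h₁'⟩, h₂, h₂'⟩ := bounds ij hij
    exact mul_le_mul h₁' h₂' h₂ (h₁.trans h₁')

theorem two_pow_rpow_div_log_two (lam : ℝ) (m : ℕ) :
    ((2 : ℝ) ^ m) ^ (lam / log 2) = exp (lam * m) := by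
  rw [← rpow_natCast, ← rpow_mul zero_le_two, rpow_def_of_pos zero_lt_two]
  congr 1
  field_simp

noncomputable def quicksortBound (lam : ℝ) (n : ℕ) : ℝ :=
  exp (-2 * lam * n) / (n ! : ℝ) ^ (lam / log 2)

theorem quicksortBound_mul (lam : ℝ) (i j : ℕ) :
    quicksortBound lam i * quicksortBound lam j =
      exp (-2 * lam * (i + j : ℕ)) * ((i ! * j ! : ℝ))⁻¹ ^ (lam / log 2) := by
  rw [quicksortBound, quicksortBound, div_mul_div_comm, ← exp_add, ← mul_rpow (by positivity)
    (by positivity), inv_rpow (by positivity), div_eq_mul_inv]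
  push_cast
  ring_nf

theorem quicksortBound_step {lam : ℝ} (hlam : 0 ≤ lam) (hlam2 : lam ≤ log 2) (m : ℕ) :
    exp (-lam * (m + 2)) / ((m : ℝ) + 1) *
        ∑ ij ∈ antidiagonal m, quicksortBound lam ij.1 * quicksortBound lam ij.2 ≤
      quicksortBound lam (m + 1) := by
  have hlog2 : 0 < log 2 := log_pos one_lt_two
  calc exp (-lam * (m + 2)) / ((m : ℝ) + 1) *
        ∑ ij ∈ antidiagonal m, quicksortBound lam ij.1 * quicksortBound lam ij.2
      = exp (-lam * (m + 2)) / ((m : ℝ) + 1) *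
          (exp (-2 * lam * m) *
            ∑ ij ∈ antidiagonal m, ((ij.1 ! * ij.2 ! : ℝ))⁻¹ ^ (lam / log 2)) := by
        congr 1
        rw [mul_sum]
        refine sum_congr rfl fun ij hij ↦ ?_
        rw [quicksortBound_mul, mem_antidiagonal.mp hij]
    _ ≤ exp (-lam * (m + 2)) / ((m : ℝ) + 1) *
          (exp (-2 * lam * m) * ((m + 1) * (2 ^ m / (m + 1)!) ^ (lam / log 2))) := by
        gcongr
        exact sum_antidiagonal_rpow_inv_factorial_mul_factorial_le (div_nonneg hlam hlog2.le)
          ((div_le_one hlog2).mpr hlam2) m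
    _ = quicksortBound lam (m + 1) := by
        rw [div_rpow (by positivity) (by positivity), two_pow_rpow_div_log_two, quicksortBound]
        field_simp
        rw [← exp_add, ← exp_add]
        push_cast
        ring_nf

/-- Upper bound on the quicksort score sequence. -/
theorem quicksort_score_upper_bound (lam : ℝ) (hlam : 0 < lam) (hlam2 : lam ≤ Real.log 2)
    (q : ℕ → ℝ) (hq0 : q 0 = 1)
    (hq : ∀ n : ℕ, 1 ≤ n → q n =
      Real.exp (-lam * (n + 1)) / n * ∑ k ∈ Finset.Icc 1 n, q (k - 1) * q (n - k)) :
    ∀ n : ℕ, q n ≤ Real.exp (-2 * lam * n) / (Nat.factorial n : ℝ) ^ (lam / Real.log 2) := by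
  have hq' : ∀ m : ℕ, q (m + 1) =
      exp (-lam * (m + 2)) / ((m : ℝ) + 1) * ∑ ij ∈ antidiagonal m, q ij.1 * q ij.2 := by
    intro m
    rw [hq (m + 1) (by omega), sum_Icc_one_eq_sum_antidiagonal (fun i j ↦ q i * q j)]
    push_cast
    ring_nf
  exact le_of_antidiagonal_recurrence (B := quicksortBound lam) (by rw [hq0]; norm_num)
    (by simp [quicksortBound, hq0]) (fun m ↦ by positivity) hq' (quicksortBound_step hlam.le hlam2)
end

section
/- For all n ≥ 0, the n+1-st harmonic number satisfies H_{n+1} < log(n+1) + γ + 1/(2(n+1)), where γ is Euler's constant. -/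
open Real Filter Topology

lemma log_lt_half_sub (y : ℝ) (hy : 1 < y) : Real.log y < (y - 1/y) / 2 := by
  have h0 : (0:ℝ) < y := by linarith
  have h := Real.self_lt_sinh_iff.2 (Real.log_pos hy)
  rwa [Real.sinh_eq, Real.exp_log h0, Real.exp_neg, Real.exp_log h0,
    ← one_div] at h

noncomputable def bseq (n : ℕ) : ℝ :=
  (harmonic (n + 1) : ℝ) - Real.log (n + 1) - 1 / (2 * (n + 1))

lemma strictMono_bseq : StrictMono bseq := by
  refine strictMono_nat_of_lt_succ fun n ↦ ?_
  have h1 : (0:ℝ) < (n:ℝ) + 1 := by positivity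
  have h2 : (0:ℝ) < (n:ℝ) + 2 := by positivity
  have hy : (1:ℝ) < ((n:ℝ) + 2) / ((n:ℝ) + 1) := by
    rw [lt_div_iff₀ h1]; linarith
  have hlog := log_lt_half_sub _ hy
  have hlogsplit : Real.log (((n:ℝ) + 2) / ((n:ℝ) + 1))
      = Real.log ((n:ℝ) + 2) - Real.log ((n:ℝ) + 1) :=
    Real.log_div (by positivity) (by positivity)
  have hharm : (harmonic (n + 1 + 1) : ℝ) = (harmonic (n + 1) : ℝ) + 1 / ((n:ℝ) + 2) := by
    rw [harmonic_succ]
    push_cast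
    ring
  have hrhs : ((((n:ℝ) + 2) / ((n:ℝ) + 1)) - 1 / (((n:ℝ) + 2) / ((n:ℝ) + 1))) / 2
      = 1 / (2 * ((n:ℝ) + 2)) + 1 / (2 * ((n:ℝ) + 1)) := by
    field_simp
    ring
  simp only [bseq]
  push_cast
  rw [hrhs, hlogsplit] at hlog
  rw [hharm]
  have e1 : ((n:ℝ) + 1 + 1) = (n:ℝ) + 2 := by ring
  rw [e1]
  have h3 : 1/((n:ℝ)+2) = 1/(2*((n:ℝ)+2)) + 1/(2*((n:ℝ)+2)) := by
    field_simp; norm_num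
  linarith

lemma tendsto_bseq : Tendsto bseq atTop (𝓝 Real.eulerMascheroniConstant) := by
  have h1 : Tendsto (fun n : ℕ ↦ (harmonic (n+1) : ℝ) - Real.log (n+1)) atTop
      (𝓝 Real.eulerMascheroniConstant) := by
    have h := Real.tendsto_harmonic_sub_log.comp (tendsto_add_atTop_nat 1)
    exact h.congr fun n => by simp only [Function.comp]; push_cast; ring
  have h2 : Tendsto (fun n : ℕ ↦ 1 / (2 * ((n:ℝ) + 1))) atTop (𝓝 0) := by
    apply Tendsto.div_atTop tendsto_const_nhds
    apply Tendsto.const_mul_atTop (by norm_num)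
    exact tendsto_atTop_add_const_right _ _ tendsto_natCast_atTop_atTop
  have := h1.sub h2
  rw [sub_zero] at this
  exact this.congr fun n => by simp only [bseq]

/-- `H_{n+1} < log(n+1) + γ + 1/(2(n+1))`. -/
theorem harmonic_lt_log_add_gamma (n : ℕ) :
    (harmonic (n + 1) : ℝ) <
      Real.log (n + 1) + Real.eulerMascheroniConstant + 1 / (2 * (n + 1)) := by
  have hle : bseq (n + 1) ≤ Real.eulerMascheroniConstant :=
    strictMono_bseq.monotone.ge_of_tendsto tendsto_bseq (n + 1)
  have hlt : bseq n < Real.eulerMascheroniConstant :=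
    (strictMono_bseq (Nat.lt_succ_self n)).trans_le hle
  simp only [bseq] at hlt
  linarith
end

section
/- Define q_n for 0 < λ ≤ log 2 by q_0 = 1 and q_n = (e^{−λ(n+1)}/n) Σ_{k=1}^n q_{k−1} q_{n−k}, and m_n = exp(−λ(n⌈log₂ n⌉ + n − 2^⌈log₂ n⌉)) with m_0 = 1. Then m_n ≥ q_n for all n ≥ 0. -/
/-!
Write `S n = ∑_{k=1}^n ⌈log₂ k⌉ = n⌈log₂ n⌉ - 2^⌈log₂ n⌉ + 1`, so that `m_n = exp (-λ (S n + n - 1))`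
for `n ≥ 1`. As `⌈log₂ k⌉` is nondecreasing in `k`, `S` is discretely convex and `S x + S y` is
smallest for the balanced split of `x + y`, where the mergesort recurrence
`S n = S ⌈n/2⌉ + S ⌊n/2⌋ + n - 1` gives `S (x + y) + 1 ≤ S x + S y + x + y`. This is exactly the
inequality that propagates `q_n ≤ exp (-λ (S (n + 1) + n))` through the quicksort recurrence,
bounding every product `q_{k-1} q_{n-k}` separately; and `S (n + 1) + n ≥ S n + n - 1`.
-/

open Real Finset

def clogSum (n : ℕ) : ℕ := ∑ k ∈ Icc 1 n, Nat.clog 2 k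

lemma clogSum_succ (n : ℕ) : clogSum (n + 1) = clogSum n + Nat.clog 2 (n + 1) :=
  sum_Icc_succ_top (Nat.le_add_left 1 n) _

lemma clogSum_add_two_pow_clog (n : ℕ) :
    clogSum n + 2 ^ Nat.clog 2 n = n * Nat.clog 2 n + 1 := by
  induction n with
  | zero => rfl
  | succ n ih =>
    rw [clogSum_succ]
    have hle : n ≤ 2 ^ Nat.clog 2 n := Nat.le_pow_clog one_lt_two n
    by_cases h : n + 1 ≤ 2 ^ Nat.clog 2 n
    · have hc : Nat.clog 2 (n + 1) = Nat.clog 2 n :=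
        le_antisymm ((Nat.clog_le_iff_le_pow one_lt_two).mpr h) (Nat.clog_mono_right _ n.le_succ)
      rw [hc, add_one_mul]
      omega
    · have hc : Nat.clog 2 (n + 1) = Nat.clog 2 n + 1 := by
        refine le_antisymm ((Nat.clog_le_iff_le_pow one_lt_two).mpr ?_)
          ((Nat.lt_clog_iff_pow_lt one_lt_two).mpr (by omega))
        have : 1 ≤ 2 ^ Nat.clog 2 n := Nat.one_le_two_pow
        rw [pow_succ]
        omega
      have hn : n = 2 ^ Nat.clog 2 n := by omega
      rw [hc, pow_succ, add_one_mul, mul_add_one]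
      omega

lemma clogSum_half_add_clogSum_half {n : ℕ} (hn : 1 ≤ n) :
    clogSum ((n + 1) / 2) + clogSum (n / 2) + n = clogSum n + 1 := by
  induction n, hn using Nat.le_induction with
  | base => rfl
  | succ n hn ih =>
    obtain ⟨h, rfl | rfl⟩ := Nat.even_or_odd' n
    · have hc := Nat.clog_of_two_le one_lt_two (n := 2 * h + 1) (by omega)
      rw [show (2 * h + 1 + 2 - 1) / 2 = h + 1 by omega] at hc
      rw [show (2 * h + 1 + 1) / 2 = h + 1 by omega, show (2 * h + 1) / 2 = h by omega,
        clogSum_succ, clogSum_succ]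
      rw [show (2 * h + 1) / 2 = h by omega, show 2 * h / 2 = h by omega] at ih
      omega
    · have hc := Nat.clog_of_two_le one_lt_two (n := 2 * h + 1 + 1) (by omega)
      rw [show (2 * h + 1 + 1 + 2 - 1) / 2 = h + 1 by omega] at hc
      rw [show (2 * h + 1 + 1 + 1) / 2 = h + 1 by omega, show (2 * h + 1 + 1) / 2 = h + 1 by omega,
        clogSum_succ (2 * h + 1)]
      rw [show (2 * h + 1 + 1) / 2 = h + 1 by omega, show (2 * h + 1) / 2 = h by omega] at ih
      have := clogSum_succ h
      omega

lemma clogSum_half_add_clogSum_half_le (x d : ℕ) :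
    clogSum ((2 * x + d + 1) / 2) + clogSum ((2 * x + d) / 2) ≤ clogSum x + clogSum (x + d) := by
  induction d using Nat.twoStepInduction generalizing x with
  | zero => rw [show (2 * x + 0 + 1) / 2 = x by omega, show (2 * x + 0) / 2 = x by omega]; rfl
  | one => rw [show (2 * x + 1 + 1) / 2 = x + 1 by omega, show (2 * x + 1) / 2 = x by omega, add_comm]
  | more d ih _ =>
    have hcloser := ih (x + 1)
    rw [show 2 * (x + 1) + d = 2 * x + (d + 2) by ring, show x + 1 + d = x + d + 1 by ring]
      at hcloser
    have hmono : Nat.clog 2 (x + 1) ≤ Nat.clog 2 (x + d + 1 + 1) :=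
      Nat.clog_mono_right 2 (by omega)
    have := clogSum_succ x
    have := clogSum_succ (x + d + 1)
    rw [show x + (d + 2) = x + d + 1 + 1 by ring]
    omega

lemma clogSum_add_add_one_le {x y : ℕ} (hxy : 1 ≤ x + y) :
    clogSum (x + y) + 1 ≤ clogSum x + clogSum y + (x + y) := by
  wlog hle : x ≤ y generalizing x y
  · rw [add_comm x y, add_comm (clogSum x)]
    exact this (by omega) (by omega)
  obtain ⟨d, rfl⟩ := Nat.exists_eq_add_of_le hle
  have := clogSum_half_add_clogSum_half_le x d
  have := clogSum_half_add_clogSum_half hxy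
  rw [show x + (x + d) = 2 * x + d by ring] at *
  omega

lemma exp_clogSum_mul_exp_clogSum_le {lam : ℝ} (hlam : 0 ≤ lam) (i j : ℕ) :
    exp (-lam * (clogSum (i + 1) + i)) * exp (-lam * (clogSum (j + 1) + j))
      ≤ exp (-lam * (clogSum (i + j + 2) - 1)) := by
  rw [← exp_add, exp_le_exp]
  have h := clogSum_add_add_one_le (x := i + 1) (y := j + 1) (by omega)
  rw [show i + 1 + (j + 1) = i + j + 2 by ring] at h
  have h' : (clogSum (i + j + 2) : ℝ) + 1 ≤ clogSum (i + 1) + clogSum (j + 1) + (i + j + 2) := by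
    exact_mod_cast h
  linarith [mul_le_mul_of_nonneg_left h' hlam]

lemma quicksort_nonneg_and_le {lam : ℝ} (hlam : 0 ≤ lam) {q : ℕ → ℝ} (hq0 : q 0 = 1)
    (hq : ∀ n : ℕ, 1 ≤ n → q n =
      exp (-lam * (n + 1)) / n * ∑ k ∈ Icc 1 n, q (k - 1) * q (n - k)) (n : ℕ) :
    0 ≤ q n ∧ q n ≤ exp (-lam * (clogSum (n + 1) + n)) := by
  induction n using Nat.strong_induction_on with
  | _ n ih =>
    rcases Nat.eq_zero_or_pos n with rfl | hn
    · simp [hq0, clogSum]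
    have hterm : ∀ k ∈ Icc 1 n, 0 ≤ q (k - 1) * q (n - k) ∧
        q (k - 1) * q (n - k) ≤ exp (-lam * (clogSum (n + 1) - 1)) := by
      intro k hk
      obtain ⟨hk1, hkn⟩ := mem_Icc.mp hk
      obtain ⟨h1, h1'⟩ := ih (k - 1) (by omega)
      obtain ⟨h2, h2'⟩ := ih (n - k) (by omega)
      have hprod := exp_clogSum_mul_exp_clogSum_le hlam (k - 1) (n - k)
      rw [show k - 1 + (n - k) + 2 = n + 1 by omega] at hprod
      exact ⟨mul_nonneg h1 h2, (mul_le_mul h1' h2' h2 (exp_pos _).le).trans hprod⟩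
    have hfac : 0 ≤ exp (-lam * (n + 1)) / n := by positivity
    rw [hq n hn]
    refine ⟨mul_nonneg hfac (sum_nonneg fun k hk => (hterm k hk).1), ?_⟩
    calc exp (-lam * (n + 1)) / n * ∑ k ∈ Icc 1 n, q (k - 1) * q (n - k)
        ≤ exp (-lam * (n + 1)) / n * (n * exp (-lam * (clogSum (n + 1) - 1))) := by
          gcongr
          simpa using sum_le_card_nsmul _ _ _ fun k hk => (hterm k hk).2
      _ = exp (-lam * (clogSum (n + 1) + n)) := by
          rw [← mul_assoc, div_mul_cancel₀ _ (by positivity : (n : ℝ) ≠ 0), ← exp_add]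
          ring_nf

theorem mergesort_score_ge_quicksort_score_general (lam : ℝ) (hlam : 0 < lam)
    (q : ℕ → ℝ) (hq0 : q 0 = 1)
    (hq : ∀ n : ℕ, 1 ≤ n → q n =
      Real.exp (-lam * (n + 1)) / n * ∑ k ∈ Finset.Icc 1 n, q (k - 1) * q (n - k))
    (m : ℕ → ℝ) (hm0 : m 0 = 1)
    (hm : ∀ n : ℕ, 1 ≤ n → m n =
      Real.exp (-lam * ((n : ℝ) * Nat.clog 2 n + n - 2 ^ Nat.clog 2 n))) :
    ∀ n : ℕ, m n ≥ q n := by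
  intro n
  rcases Nat.eq_zero_or_pos n with rfl | hn
  · rw [hm0, hq0]
  have hclosed : (n : ℝ) * Nat.clog 2 n + n - 2 ^ Nat.clog 2 n = clogSum n + n - 1 := by
    have h : (clogSum n : ℝ) + 2 ^ Nat.clog 2 n = n * Nat.clog 2 n + 1 := by
      exact_mod_cast clogSum_add_two_pow_clog n
    linarith
  refine (quicksort_nonneg_and_le hlam.le hq0 hq n).2.trans ?_
  rw [hm n hn, hclosed, exp_le_exp, clogSum_succ]
  refine mul_le_mul_of_nonpos_left ?_ (neg_nonpos.mpr hlam.le)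
  push_cast
  linarith [(Nat.cast_nonneg (Nat.clog 2 (n + 1)) : (0 : ℝ) ≤ _)]

/-- The mergesort score dominates the quicksort score: `m_n ≥ q_n` for all `n`. -/
theorem mergesort_score_ge_quicksort_score (lam : ℝ) (hlam : 0 < lam)
    (hlam2 : lam ≤ Real.log 2)
    (q : ℕ → ℝ) (hq0 : q 0 = 1)
    (hq : ∀ n : ℕ, 1 ≤ n → q n =
      Real.exp (-lam * (n + 1)) / n * ∑ k ∈ Finset.Icc 1 n, q (k - 1) * q (n - k))
    (m : ℕ → ℝ) (hm0 : m 0 = 1)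
    (hm : ∀ n : ℕ, 1 ≤ n → m n =
      Real.exp (-lam * ((n : ℝ) * Nat.clog 2 n + n - 2 ^ Nat.clog 2 n))) :
    ∀ n : ℕ, m n ≥ q n :=
  mergesort_score_ge_quicksort_score_general lam hlam q hq0 hq m hm0 hm
end

section
/- For 0 < λ ≤ log 2, the quicksort score sequence satisfies lim_{n→∞} q_n = 0, and more precisely q_n = O(e^{−2λn}/(n!)^{λ/log 2}). -/
open Real Finset Filter Asymptotics

lemma qs_holder {n : ℕ} (hn : 1 ≤ n) {a : ℝ} (ha0 : 0 < a) (ha1 : a ≤ 1)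
    (f : ℕ → ℕ) :
    ∑ k ∈ Finset.Icc 1 n, (f k : ℝ) ^ a ≤
      (n : ℝ) * (((n : ℝ))⁻¹ * ∑ k ∈ Finset.Icc 1 n, (f k : ℝ)) ^ a := by
  have hx0 : (0:ℝ) < n := by exact_mod_cast hn
  have hp : 1 ≤ 1/a := one_le_one_div ha0 ha1
  have key := Real.arith_mean_le_rpow_mean (Finset.Icc 1 n) (fun _ => ((n:ℝ))⁻¹)
    (fun k => (f k : ℝ) ^ a) (fun i _ => by positivity)
    (by rw [Finset.sum_const, Nat.card_Icc]
        simp only [Nat.add_sub_cancel, nsmul_eq_mul]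
        exact mul_inv_cancel₀ hx0.ne')
    (fun i _ => by positivity) hp
  simp only [one_div_one_div] at key
  have hz : ∀ k : ℕ, ((f k : ℝ) ^ a) ^ (1/a) = (f k : ℝ) := fun k => by
    rw [← Real.rpow_mul (Nat.cast_nonneg _), mul_one_div_cancel ha0.ne', Real.rpow_one]
  simp only [hz, ← Finset.mul_sum] at key
  rw [← inv_mul_le_iff₀ hx0]
  exact key

lemma qs_bound (lam : ℝ) (hlam : 0 < lam) (hlam2 : lam ≤ Real.log 2)
    (q : ℕ → ℝ) (hq0 : q 0 = 1)
    (hq : ∀ n : ℕ, 1 ≤ n → q n =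
      Real.exp (-lam * (n + 1)) / n * ∑ k ∈ Finset.Icc 1 n, q (k - 1) * q (n - k)) :
    ∀ n : ℕ, 0 ≤ q n ∧
      q n ≤ Real.exp (-2 * lam * n) / (Nat.factorial n : ℝ) ^ (lam / Real.log 2) := by
  have hlog : (0:ℝ) < Real.log 2 := Real.log_pos one_lt_two
  set a := lam / Real.log 2 with ha
  have ha0 : 0 < a := div_pos hlam hlog
  have ha1 : a ≤ 1 := (div_le_one hlog).mpr hlam2
  have halam : a * Real.log 2 = lam := div_mul_cancel₀ _ hlog.ne'
  set B : ℕ → ℝ := fun m => Real.exp (-2 * lam * m) / (Nat.factorial m : ℝ) ^ a with hB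
  have hBpos : ∀ m, 0 < B m := fun m =>
    div_pos (Real.exp_pos _) (Real.rpow_pos_of_pos (by exact_mod_cast m.factorial_pos) _)
  intro n
  induction n using Nat.strong_induction_on with
  | _ n ih =>
    rcases Nat.eq_zero_or_pos n with h0 | hn
    · subst h0
      norm_num [hq0]
    obtain ⟨m, rfl⟩ : ∃ m, n = m + 1 := ⟨n - 1, by omega⟩
    set x : ℝ := ((m + 1 : ℕ) : ℝ) with hxdef
    have hx0 : (0:ℝ) < x := by positivity
    have hy : (m : ℝ) = x - 1 := by push_cast [hxdef]; ring
    -- termwise bounds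
    have hterm : ∀ k ∈ Finset.Icc 1 (m+1), 0 ≤ q (k-1) * q (m+1-k) ∧
        q (k-1) * q (m+1-k) ≤ B (k-1) * B (m+1-k) := by
      intro k hk
      rw [Finset.mem_Icc] at hk
      have ih1 := ih (k-1) (by omega)
      have ih2 := ih (m+1-k) (by omega)
      exact ⟨mul_nonneg ih1.1 ih2.1,
        mul_le_mul ih1.2 ih2.2 ih2.1 (hBpos _).le⟩
    have hqn := hq (m+1) (by omega)
    have hpref : 0 ≤ Real.exp (-lam * (((m+1:ℕ):ℝ) + 1)) / ((m+1:ℕ):ℝ) :=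
      div_nonneg (Real.exp_pos _).le hx0.le
    constructor
    · rw [hqn]
      exact mul_nonneg hpref (Finset.sum_nonneg fun k hk => (hterm k hk).1)
    -- upper bound
    have step2 : ∀ k ∈ Finset.Icc 1 (m+1), B (k-1) * B (m+1-k) =
        Real.exp (-2 * lam * (x - 1)) / ((Nat.factorial m : ℝ)) ^ a *
          ((m.choose (k-1) : ℝ)) ^ a := by
      intro k hk
      rw [Finset.mem_Icc] at hk
      obtain ⟨hk1, hkm⟩ := hk
      have hfac : m.choose (k-1) * (k-1).factorial * (m+1-k).factorial = m.factorial := by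
        have h := Nat.choose_mul_factorial_mul_factorial (show k-1 ≤ m by omega)
        rwa [show m - (k-1) = m+1-k by omega] at h
      have hfacR : (m.factorial : ℝ) =
          (m.choose (k-1) : ℝ) * (((k-1).factorial : ℝ) * ((m+1-k).factorial : ℝ)) := by
        exact_mod_cast (by rw [← hfac]; ring : (m.factorial : ℕ) = _)
      have hD : ((m.factorial : ℝ)) ^ a =
          (m.choose (k-1) : ℝ) ^ a * (((k-1).factorial : ℝ) * ((m+1-k).factorial : ℝ)) ^ a := by
        rw [← Real.mul_rpow (by positivity) (by positivity)]
        rw [hfacR]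
      have hc1 : ((k-1:ℕ):ℝ) = (k:ℝ) - 1 := by
        push_cast [Nat.cast_sub hk1]; ring
      have hc2 : ((m+1-k:ℕ):ℝ) = x - (k:ℝ) := by
        rw [hxdef, Nat.cast_sub (by omega)]
      have hCpos : (0:ℝ) < (m.choose (k-1) : ℝ) := by
        exact_mod_cast Nat.choose_pos (show k-1 ≤ m by omega)
      simp only [hB]
      rw [div_mul_div_comm, ← Real.exp_add,
        ← Real.mul_rpow (by positivity) (by positivity),
        show -2 * lam * ((k-1:ℕ):ℝ) + -2 * lam * ((m+1-k:ℕ):ℝ) = -2 * lam * (x - 1) by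
          rw [hc1, hc2]; ring,
        hD]
      have h1 : ((m.choose (k-1):ℝ)) ^ a ≠ 0 := by positivity
      have h2 : (((k-1).factorial : ℝ) * ((m+1-k).factorial : ℝ)) ^ a ≠ 0 := by positivity
      field_simp
    have hsum2 : ∑ k ∈ Finset.Icc 1 (m+1), B (k-1) * B (m+1-k) =
        Real.exp (-2 * lam * (x - 1)) / ((Nat.factorial m : ℝ)) ^ a *
          ∑ k ∈ Finset.Icc 1 (m+1), ((m.choose (k-1) : ℝ)) ^ a := by
      rw [Finset.mul_sum]
      exact Finset.sum_congr rfl step2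
    -- binomial sum
    have hbin : ∑ k ∈ Finset.Icc 1 (m+1), ((m.choose (k-1) : ℝ)) = (2:ℝ) ^ m := by
      have hN : ∑ k ∈ Finset.Icc 1 (m+1), m.choose (k-1) = 2 ^ m := by
        rw [← Nat.sum_range_choose m]
        apply Finset.sum_nbij' (fun k => k - 1) (fun j => j + 1) <;>
          simp +contextual [Finset.mem_Icc, Finset.mem_range] <;> omega
      calc ∑ k ∈ Finset.Icc 1 (m+1), ((m.choose (k-1) : ℝ))
          = ((∑ k ∈ Finset.Icc 1 (m+1), m.choose (k-1) : ℕ) : ℝ) := by push_cast; ring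
        _ = (2:ℝ) ^ m := by rw [hN]; push_cast; ring
    -- Hölder
    have hhold : ∑ k ∈ Finset.Icc 1 (m+1), ((m.choose (k-1) : ℝ)) ^ a ≤
        x * (x⁻¹ * (2:ℝ) ^ m) ^ a := by
      have h := qs_holder (n := m+1) (by omega) ha0 ha1 (fun k => m.choose (k-1))
      rwa [hbin] at h
    -- simplify the Hölder RHS
    have hE : x * (x⁻¹ * (2:ℝ) ^ m) ^ a = x * (x ^ a)⁻¹ * Real.exp (lam * (x - 1)) := by
      rw [Real.mul_rpow (by positivity) (by positivity), Real.inv_rpow hx0.le]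
      have h2m : ((2:ℝ) ^ m) ^ a = Real.exp (lam * (x - 1)) := by
        rw [← Real.rpow_natCast (2:ℝ) m, ← Real.rpow_mul (by norm_num),
          Real.rpow_def_of_pos (by norm_num : (0:ℝ) < 2)]
        congr 1
        rw [hy] at *
        calc Real.log 2 * ((x - 1) * a) = a * Real.log 2 * (x - 1) := by ring
          _ = lam * (x - 1) := by rw [halam]
      rw [h2m]; ring
    -- total sum bound
    have hS : ∑ k ∈ Finset.Icc 1 (m+1), q (k-1) * q (m+1-k) ≤
        Real.exp (-2 * lam * (x - 1)) / ((Nat.factorial m : ℝ)) ^ a *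
          (x * (x ^ a)⁻¹ * Real.exp (lam * (x - 1))) := by
      calc ∑ k ∈ Finset.Icc 1 (m+1), q (k-1) * q (m+1-k)
          ≤ ∑ k ∈ Finset.Icc 1 (m+1), B (k-1) * B (m+1-k) :=
            Finset.sum_le_sum fun k hk => (hterm k hk).2
        _ = Real.exp (-2 * lam * (x - 1)) / ((Nat.factorial m : ℝ)) ^ a *
              ∑ k ∈ Finset.Icc 1 (m+1), ((m.choose (k-1) : ℝ)) ^ a := hsum2
        _ ≤ _ := by
            rw [← hE]
            exact mul_le_mul_of_nonneg_left hhold (by positivity)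
    -- final identity
    have hFm : (0:ℝ) < (Nat.factorial m : ℝ) ^ a :=
      Real.rpow_pos_of_pos (by exact_mod_cast m.factorial_pos) _
    have hfactsucc : ((Nat.factorial (m+1) : ℕ) : ℝ) = x * (Nat.factorial m : ℝ) := by
      rw [Nat.factorial_succ]; push_cast [hxdef]; ring
    have hfinal : Real.exp (-lam * (x + 1)) / x *
        (Real.exp (-2 * lam * (x - 1)) / ((Nat.factorial m : ℝ)) ^ a *
          (x * (x ^ a)⁻¹ * Real.exp (lam * (x - 1)))) =
        Real.exp (-2 * lam * x) / ((Nat.factorial (m+1) : ℕ) : ℝ) ^ a := by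
      have eexp : Real.exp (-lam * (x + 1)) * (Real.exp (-2 * lam * (x - 1)) *
          Real.exp (lam * (x - 1))) = Real.exp (-2 * lam * x) := by
        rw [← Real.exp_add, ← Real.exp_add]; congr 1; ring
      rw [hfactsucc, Real.mul_rpow hx0.le (by positivity)]
      have hxa : (0:ℝ) < x ^ a := Real.rpow_pos_of_pos hx0 _
      rw [show Real.exp (-lam * (x + 1)) / x *
          (Real.exp (-2 * lam * (x - 1)) / (Nat.factorial m : ℝ) ^ a *
            (x * (x ^ a)⁻¹ * Real.exp (lam * (x - 1)))) =
          (Real.exp (-lam * (x + 1)) * (Real.exp (-2 * lam * (x - 1)) *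
            Real.exp (lam * (x - 1)))) *
            ((x / x) * ((x ^ a)⁻¹ / (Nat.factorial m : ℝ) ^ a)) from by ring,
        eexp, div_self hx0.ne', one_mul]
      field_simp
    -- conclude
    rw [hqn]
    calc Real.exp (-lam * (((m+1:ℕ):ℝ) + 1)) / ((m+1:ℕ):ℝ) *
          ∑ k ∈ Finset.Icc 1 (m+1), q (k-1) * q (m+1-k)
        ≤ Real.exp (-lam * (x + 1)) / x *
            (Real.exp (-2 * lam * (x - 1)) / ((Nat.factorial m : ℝ)) ^ a *
              (x * (x ^ a)⁻¹ * Real.exp (lam * (x - 1)))) :=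
          mul_le_mul_of_nonneg_left hS hpref
      _ = Real.exp (-2 * lam * x) / ((Nat.factorial (m+1) : ℕ) : ℝ) ^ a := hfinal
      _ = Real.exp (-2 * lam * ((m+1:ℕ):ℝ)) / ((Nat.factorial (m+1)) : ℝ) ^ a := rfl

/-- The quicksort score sequence tends to `0`, and is
`O(e^{−2λn}/(n!)^{λ/log 2})`. -/
theorem quicksort_score_tendsto_zero (lam : ℝ) (hlam : 0 < lam)
    (hlam2 : lam ≤ Real.log 2)
    (q : ℕ → ℝ) (hq0 : q 0 = 1)
    (hq : ∀ n : ℕ, 1 ≤ n → q n =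
      Real.exp (-lam * (n + 1)) / n * ∑ k ∈ Finset.Icc 1 n, q (k - 1) * q (n - k)) :
    Filter.Tendsto q Filter.atTop (nhds 0) ∧
      q =O[Filter.atTop]
        fun n => Real.exp (-2 * lam * n) / (Nat.factorial n : ℝ) ^ (lam / Real.log 2) := by
  have hb := qs_bound lam hlam hlam2 q hq0 hq
  have ha0 : 0 < lam / Real.log 2 := div_pos hlam (Real.log_pos one_lt_two)
  have hBpos : ∀ n : ℕ, 0 < Real.exp (-2 * lam * n) /
      (Nat.factorial n : ℝ) ^ (lam / Real.log 2) := fun n =>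
    div_pos (Real.exp_pos _)
      (Real.rpow_pos_of_pos (by exact_mod_cast n.factorial_pos) _)
  constructor
  · apply squeeze_zero (fun n => (hb n).1) (fun n => (hb n).2)
    have hle : ∀ n : ℕ, Real.exp (-2 * lam * n) /
        (Nat.factorial n : ℝ) ^ (lam / Real.log 2) ≤ Real.exp (-2 * lam) ^ n := by
      intro n
      have h1 : (1:ℝ) ≤ (Nat.factorial n : ℝ) ^ (lam / Real.log 2) := by
        calc (1:ℝ) = (1:ℝ) ^ (lam / Real.log 2) := (Real.one_rpow _).symm
          _ ≤ (Nat.factorial n : ℝ) ^ (lam / Real.log 2) :=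
            Real.rpow_le_rpow zero_le_one (by exact_mod_cast n.factorial_pos) ha0.le
      calc Real.exp (-2 * lam * n) / (Nat.factorial n : ℝ) ^ (lam / Real.log 2)
          ≤ Real.exp (-2 * lam * n) / 1 :=
            div_le_div_of_nonneg_left (Real.exp_pos _).le zero_lt_one h1
        _ = Real.exp (-2 * lam * n) := div_one _
        _ = Real.exp (-2 * lam) ^ n := by
            rw [← Real.exp_nat_mul]; ring_nf
    apply squeeze_zero (fun n => (hBpos n).le) hle
    exact tendsto_pow_atTop_nhds_zero_of_lt_one (Real.exp_pos _).le
      (Real.exp_lt_one_iff.mpr (by nlinarith))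
  · apply Asymptotics.IsBigO.of_bound 1
    filter_upwards with n
    rw [one_mul, Real.norm_eq_abs, Real.norm_eq_abs, abs_of_nonneg (hb n).1,
      abs_of_pos (hBpos n)]
    exact (hb n).2
end
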